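/- For every finite set 𝒱 of free-connex acyclic views over a schema σ whose relation symbols have arity at most k, there exists a finite set 𝒲 of acyclic views over σ, each of head arity at most k, such that every conjunctive query Q over σ is 𝒱-rewritable if and only if it is 𝒲-rewritable. -/

import Mathlib

/-- A relational atom (or fact): a relation symbol with a list of arguments.
Arguments are natural numbers, serving both as variables and as data values. -/
structure Atom where
  rel : ℕ
  args : List ℕ
deriving DecidableEq

/-- Apply a substitution to an atom. -/
def mapAtom (f : ℕ → ℕ) (A : Atom) : Atom := ⟨A.rel, A.args.map f⟩

/-- The variables of an atom. -/
def Atom.vars (A : Atom) : Finset ℕ := A.args.toFinset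

/-- The variables of a finite set of atoms. -/
def varsOf (B : Finset Atom) : Finset ℕ := B.biUnion Atom.vars

/-- A conjunctive query: a head atom and a finite set of body atoms. -/
structure CQ where
  head : Atom
  body : Finset Atom
deriving DecidableEq

/-- All variables of a conjunctive query. -/
def CQ.vars (Q : CQ) : Finset ℕ := Q.head.vars ∪ varsOf Q.body

/-- A schema: a set of relation symbols together with an arity function. -/
structure Schema where
  rels : Set ℕ
  ar : ℕ → ℕ

/-- An atom (or fact) over a schema. -/
def atomOver (σ : Schema) (A : Atom) : Prop :=
  A.rel ∈ σ.rels ∧ A.args.length = σ.ar A.rel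

/-- `Q` is a (well-formed) conjunctive query over schema `σ`:
nonempty body of σ-atoms, head relation symbol not in σ, and safety. -/
def isCQ (σ : Schema) (Q : CQ) : Prop :=
  Q.body.Nonempty ∧ (∀ A ∈ Q.body, atomOver σ A) ∧
  Q.head.rel ∉ σ.rels ∧ Q.head.vars ⊆ varsOf Q.body

/-- A database is a set of facts (finiteness is imposed where needed). -/
abbrev Database := Set Atom

/-- A database over a schema. -/
def isDBOver (σ : Schema) (D : Database) : Prop := ∀ F ∈ D, atomOver σ F

/-- The result of a conjunctive query on a database. -/
def evalCQ (Q : CQ) (D : Database) : Set Atom :=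
  { F | ∃ ν : ℕ → ℕ, (∀ A ∈ Q.body, mapAtom ν A ∈ D) ∧ mapAtom ν Q.head = F }

/-- Containment of conjunctive queries. -/
def containedCQ (Q1 Q2 : CQ) : Prop :=
  ∀ D : Database, D.Finite → evalCQ Q1 D ⊆ evalCQ Q2 D

/-- Equivalence of conjunctive queries. -/
def equivCQ (Q1 Q2 : CQ) : Prop :=
  ∀ D : Database, D.Finite → evalCQ Q1 D = evalCQ Q2 D

/-- A conjunctive query is minimal if no equivalent CQ has strictly fewer body atoms. -/
def isMinimal (Q : CQ) : Prop :=
  ∀ Q2 : CQ, equivCQ Q Q2 → Q.body.card ≤ Q2.body.card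

/-- A homomorphism from `Q2` to `Q1`. -/
def isHom (h : ℕ → ℕ) (Q2 Q1 : CQ) : Prop :=
  (∀ A ∈ Q2.body, mapAtom h A ∈ Q1.body) ∧ mapAtom h Q2.head = Q1.head

/-- A body homomorphism from `Q2` to `Q1`. -/
def isBodyHom (h : ℕ → ℕ) (Q2 Q1 : CQ) : Prop :=
  ∀ A ∈ Q2.body, mapAtom h A ∈ Q1.body

/-- A set of views over σ: each view is a CQ over σ and views have
pairwise distinct head relation symbols. -/
def isViewSet (σ : Schema) (𝒱 : Finset CQ) : Prop :=
  (∀ V ∈ 𝒱, isCQ σ V) ∧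
  ∀ V ∈ 𝒱, ∀ W ∈ 𝒱, V ≠ W → V.head.rel ≠ W.head.rel

/-- The 𝒱-defined database 𝒱(D). -/
def viewDB (𝒱 : Finset CQ) (D : Database) : Database :=
  ⋃ V ∈ 𝒱, evalCQ V D

/-- `Q'` is a CQ over the schema σ_𝒱 of the head relations of the views 𝒱. -/
def overViews (𝒱 : Finset CQ) (Q' : CQ) : Prop :=
  Q'.body.Nonempty ∧
  (∀ A ∈ Q'.body, ∃ V ∈ 𝒱, A.rel = V.head.rel ∧ A.args.length = V.head.args.length) ∧
  (∀ V ∈ 𝒱, Q'.head.rel ≠ V.head.rel) ∧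
  Q'.head.vars ⊆ varsOf Q'.body

/-- `Q'` is a 𝒱-rewriting of `Q`: `Q'` is over σ_𝒱 and `Q'(𝒱(D)) = Q(D)`
for every (finite) database `D` over σ. -/
def isRewriting (σ : Schema) (𝒱 : Finset CQ) (Q Q' : CQ) : Prop :=
  overViews 𝒱 Q' ∧
  ∀ D : Database, D.Finite → isDBOver σ D →
    evalCQ Q' (viewDB 𝒱 D) = evalCQ Q D

/-- `T` is a join tree for the atom set `B`. -/
def joinTreeProp (B : Finset Atom) (T : SimpleGraph {A : Atom // A ∈ B}) : Prop :=
  T.IsTree ∧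
  ∀ (x : ℕ) (A A' : {A : Atom // A ∈ B}) (p : T.Walk A A'), p.IsPath →
    x ∈ A.1.vars → x ∈ A'.1.vars → ∀ C ∈ p.support, x ∈ C.1.vars

/-- The atom set `B` has a join tree. -/
def hasJoinTree (B : Finset Atom) : Prop :=
  ∃ T : SimpleGraph {A : Atom // A ∈ B}, joinTreeProp B T

/-- A conjunctive query is acyclic if its body has a join tree. -/
def isAcyclicCQ (Q : CQ) : Prop := hasJoinTree Q.body

/-- A conjunctive query is free-connex acyclic. -/
def isFreeConnex (Q : CQ) : Prop :=
  isAcyclicCQ Q ∧ hasJoinTree (insert Q.head Q.body)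

/-- The bridge variables of `𝒜 ⊆ body(Q)`. -/
def bvars (Q : CQ) (𝒜 : Finset Atom) : Finset ℕ :=
  varsOf 𝒜 ∩ (Q.head.vars ∪ varsOf (Q.body \ 𝒜))

/-- An application of a view `V`: a substitution that does not unify any
quantified variable of `V` with another variable of `V`. -/
def isApplication (V : CQ) (α : ℕ → ℕ) : Prop :=
  ∀ x ∈ varsOf V.body, x ∉ V.head.vars →
    ∀ y ∈ CQ.vars V, y ≠ x → α x ≠ α y

/-- The query α(V). -/
def applyCQ (α : ℕ → ℕ) (V : CQ) : CQ :=
  ⟨mapAtom α V.head, V.body.image (mapAtom α)⟩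

/-- `(𝒜, V, α, ψ)` is a cover description for `Q`. -/
def isCoverDesc (Q : CQ) (𝒜 : Finset Atom) (V : CQ) (α ψ : ℕ → ℕ) : Prop :=
  𝒜 ⊆ Q.body ∧ isApplication V α ∧
  𝒜 ⊆ V.body.image (mapAtom α) ∧
  bvars Q 𝒜 ⊆ V.head.vars.image α ∧
  isBodyHom ψ (applyCQ α V) Q ∧
  ∀ x ∈ varsOf 𝒜, ψ x = x

/-- A cover partition for `Q` over `𝒱`: a collection of cover descriptions
whose atom sets partition `body(Q)`. -/
def isCoverPartition (Q : CQ) (𝒱 : Finset CQ) (m : ℕ)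
    (𝒜 : Fin m → Finset Atom) (V : Fin m → CQ) (α ψ : Fin m → ℕ → ℕ) : Prop :=
  (∀ i, V i ∈ 𝒱 ∧ isCoverDesc Q (𝒜 i) (V i) (α i) (ψ i)) ∧
  ∀ A ∈ Q.body, ∃! i, A ∈ 𝒜 i

/-- Consistency of a cover partition: a variable of any `α_j(V_j)` lies in the
range of another `α_i` only if it also lies in `bvars(𝒜_j)`. -/
def isConsistent (Q : CQ) (m : ℕ) (𝒜 : Fin m → Finset Atom) (V : Fin m → CQ)
    (α : Fin m → ℕ → ℕ) : Prop :=
  ∀ i j : Fin m, i ≠ j → ∀ z ∈ CQ.vars (applyCQ (α j) (V j)),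
    (∃ x ∈ CQ.vars (V i), α i x = z) → z ∈ bvars Q (𝒜 j)

/-- The query `Q_𝒞` induced by a (consistent) cover partition. -/
def inducedCQ (Q : CQ) (m : ℕ) (V : Fin m → CQ) (α : Fin m → ℕ → ℕ) : CQ :=
  ⟨Q.head, Finset.image (fun i => mapAtom (α i) (V i).head) Finset.univ⟩

/-- Quantified variable disjointness for a family of view applications. -/
def QVD (m : ℕ) (V : Fin m → CQ) (α : Fin m → ℕ → ℕ) : Prop :=
  ∀ i j : Fin m, i ≠ j → ∀ x ∈ varsOf (V i).body, x ∉ (V i).head.vars →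
    ∀ y ∈ CQ.vars (V j), α i x ≠ α j y

/-- `QE` is an expansion of `Q'` with respect to the views `𝒱`. -/
def isExpansion (𝒱 : Finset CQ) (Q' QE : CQ) : Prop :=
  ∃ (m : ℕ) (A' : Fin m → Atom) (V : Fin m → CQ) (α : Fin m → ℕ → ℕ),
    (∀ i, V i ∈ 𝒱 ∧ isApplication (V i) (α i) ∧ A' i = mapAtom (α i) (V i).head) ∧
    Q'.body = Finset.image A' Finset.univ ∧
    QVD m V α ∧
    QE.head = Q'.head ∧
    QE.body = Finset.biUnion Finset.univ (fun i => (V i).body.image (mapAtom (α i)))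

/-- `atoms(x)`: the body atoms of `Q` containing the variable `x`. -/
def atomsWith (Q : CQ) (x : ℕ) : Finset Atom :=
  Q.body.filter (fun A => x ∈ A.vars)

/-- Hierarchical conjunctive queries. -/
def isHierarchical (Q : CQ) : Prop :=
  ∀ x y : ℕ, atomsWith Q x ⊆ atomsWith Q y ∨ atomsWith Q y ⊆ atomsWith Q x ∨
    atomsWith Q x ∩ atomsWith Q y = ∅

/-- q-hierarchical conjunctive queries. -/
def isQHierarchical (Q : CQ) : Prop :=
  isHierarchical Q ∧ ∀ x y : ℕ, atomsWith Q x ⊂ atomsWith Q y →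
    x ∈ Q.head.vars → y ∈ Q.head.vars

/-- `P` is a partition of `body(Q)` witnessing weak head arity at most `k`. -/
def witnessesWHA (Q : CQ) (k n : ℕ) (P : Fin n → Finset Atom) : Prop :=
  (∀ i, (P i).Nonempty) ∧ (∀ i, P i ⊆ Q.body) ∧ (∀ A ∈ Q.body, ∃! i, A ∈ P i) ∧
  (∀ i, (varsOf (P i) ∩ Q.head.vars).card ≤ k) ∧
  (∀ i j, i ≠ j → ∀ x ∈ varsOf (P i), x ∈ varsOf (P j) → x ∈ Q.head.vars)

/-- `Q` has weak head arity at most `k`. -/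
def hasWHAle (Q : CQ) (k : ℕ) : Prop := ∃ n P, witnessesWHA Q k n P

/-- The weak head arity of `Q`. -/
noncomputable def weakHeadArity (Q : CQ) : ℕ := sInf {k | hasWHAle Q k}

/-- The cover graph of `Q`: vertices are the body atoms, with an edge between
two atoms iff they share a variable not occurring in the head. -/
def coverGraph (Q : CQ) : SimpleGraph {A : Atom // A ∈ Q.body} :=
  SimpleGraph.fromRel (fun A B => ∃ x, x ∈ A.1.vars ∧ x ∈ B.1.vars ∧ x ∉ Q.head.vars)

/-- A subset `s` of the atom set `B` is connected in the (join) tree `T`. -/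
def connectedIn (B : Finset Atom) (T : SimpleGraph {A : Atom // A ∈ B}) (s : Finset Atom) : Prop :=
  (T.induce {A : {A : Atom // A ∈ B} | A.1 ∈ s}).Connected

open SimpleGraph Walk in
lemma tree_pick {α : Type*} {T : SimpleGraph α} (hT : T.IsTree) (H : α)
    (vars : α → Finset ℕ)
    (hjoin : ∀ (x : ℕ) (A A' : α) (p : T.Walk A A'), p.IsPath →
      x ∈ vars A → x ∈ vars A' → ∀ C ∈ p.support, x ∈ vars C) :
    ∃ f : α → α, (∀ C, C ≠ H → f C ≠ H) ∧
      (∀ C x, x ∈ vars H → x ∈ vars C → x ∈ vars (f C)) ∧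
      (∀ C C' x, C ≠ H → C' ≠ H → x ∈ vars C → x ∈ vars C' → x ∉ vars H → f C = f C') := by
  classical
  choose p hp huniq using hT.existsUnique_path
  refine ⟨fun C => (p H C).getVert 1, ?_, ?_, ?_⟩
  · intro C hC
    show (p H C).getVert 1 ≠ H
    have hnn : ¬ (p H C).Nil := Walk.not_nil_of_ne (Ne.symm hC)
    obtain ⟨b, hadj, q, hq⟩ := Walk.not_nil_iff.mp hnn
    have hpath := hp H C
    rw [hq] at hpath ⊢
    rw [Walk.getVert_cons_succ, Walk.getVert_zero]
    rcases (Walk.cons_isPath_iff _ _).1 hpath with ⟨_, hHs⟩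
    exact fun h => hHs (h ▸ q.start_mem_support)
  · intro C x hxH hxC
    show x ∈ vars ((p H C).getVert 1)
    by_cases hC : C = H
    · subst hC
      have hnil : p C C = Walk.nil := (huniq C C Walk.nil IsPath.nil).symm
      rw [hnil]
      simpa using hxH
    · have hmem : (p H C).getVert 1 ∈ (p H C).support := by
        rw [Walk.mem_support_iff_exists_getVert]
        refine ⟨1, rfl, ?_⟩
        have hnn : ¬ (p H C).Nil := Walk.not_nil_of_ne (Ne.symm hC)
        rw [Walk.not_nil_iff_lt_length] at hnn
        omega
      exact hjoin x H C (p H C) (hp H C) hxH hxC _ hmem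
  · -- adjacency step
    have hlen : ∀ C : α, C ≠ H → 1 ≤ (p H C).length := by
      intro C hC
      have hnn : ¬ (p H C).Nil := Walk.not_nil_of_ne (Ne.symm hC)
      rw [Walk.not_nil_iff_lt_length] at hnn; omega
    have adjstep : ∀ C b : α, C ≠ H → b ≠ H → T.Adj C b →
        (p H C).getVert 1 = (p H b).getVert 1 := by
      intro C b hC hb hadj
      by_cases hmem : C ∈ (p H b).support
      · have ht : ((p H b).takeUntil C hmem).IsPath := (hp H b).takeUntil hmem
        have heq : (p H b).takeUntil C hmem = p H C := huniq H C _ ht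
        have hspec := (p H b).take_spec hmem
        have hlt : 1 ≤ ((p H b).takeUntil C hmem).length := by
          rw [heq]; exact hlen C hC
        rw [← heq]
        conv_rhs => rw [← hspec]
        rw [Walk.getVert_append]
        by_cases h1 : 1 < ((p H b).takeUntil C hmem).length
        · simp [h1]
        · have hl : ((p H b).takeUntil C hmem).length = 1 := by omega
          simp only [h1, if_false]
          rw [hl]
          simp only [Nat.sub_self, Walk.getVert_zero]
          have := ((p H b).takeUntil C hmem).getVert_length
          rw [hl] at this
          exact this
      · have hr : ((p H b).concat hadj.symm).IsPath := by
          rw [Walk.isPath_def, Walk.support_concat,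
            List.nodup_append]
          refine ⟨(hp H b).support_nodup, List.nodup_singleton _, ?_⟩
          intro a ha _ hb' hab
          rw [List.mem_singleton] at hb'
          subst hb'
          subst hab
          exact hmem ha
        have heq : (p H b).concat hadj.symm = p H C := huniq H C _ hr
        rw [← heq, Walk.concat_eq_append, Walk.getVert_append]
        by_cases h1 : 1 < (p H b).length
        · simp [h1]
        · have hl : (p H b).length = 1 := by have := hlen b hb; omega
          simp only [h1, if_false]
          rw [hl]
          simp only [Nat.sub_self, Walk.getVert_zero]
          have := (p H b).getVert_length
          rw [hl] at this
          exact this.symm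
    have key : ∀ (C C' : α) (q : T.Walk C C'), H ∉ q.support →
        (p H C).getVert 1 = (p H C').getVert 1 := by
      intro C C' q
      induction q with
      | nil => intro _; rfl
      | cons hadj q' ih =>
        intro hH
        rw [Walk.support_cons] at hH
        simp only [List.mem_cons, not_or] at hH
        obtain ⟨hH1, hH2⟩ := hH
        have hb : _ ≠ H := fun h => hH2 (h ▸ q'.start_mem_support)
        exact (adjstep _ _ (Ne.symm hH1) hb hadj).trans (ih hH2)
    intro C C' x hC hC' hxC hxC' hxH
    show (p H C).getVert 1 = (p H C').getVert 1
    have hq := hp C C'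
    have hall := hjoin x C C' (p C C') hq hxC hxC'
    refine key C C' (p C C') ?_
    intro hmem
    exact hxH (hall H hmem)
/-! ### Auxiliary lemmas -/

lemma mapAtom_rel (f : ℕ → ℕ) (A : Atom) : (mapAtom f A).rel = A.rel := rfl

lemma mapAtom_mapAtom (f g : ℕ → ℕ) (A : Atom) :
    mapAtom f (mapAtom g A) = mapAtom (fun x => f (g x)) A := by
  simp [mapAtom]

lemma mapAtom_id (A : Atom) : mapAtom id A = A := by simp [mapAtom]

lemma mem_vars_iff {x : ℕ} {A : Atom} : x ∈ A.vars ↔ x ∈ A.args := List.mem_toFinset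

lemma mapAtom_congr {f g : ℕ → ℕ} {A : Atom} (h : ∀ x ∈ A.vars, f x = g x) :
    mapAtom f A = mapAtom g A := by
  simp only [mapAtom, Atom.mk.injEq, true_and]
  exact List.map_congr_left (fun x hx => h x (mem_vars_iff.2 hx))

lemma mem_varsOf {x : ℕ} {B : Finset Atom} : x ∈ varsOf B ↔ ∃ A ∈ B, x ∈ A.vars := by
  simp [varsOf]

instance : Countable Atom :=
  Countable.of_equiv (ℕ × List ℕ)
    ⟨fun p => ⟨p.1, p.2⟩, fun A => (A.rel, A.args), fun _ => rfl, fun _ => rfl⟩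

instance : Countable CQ :=
  Countable.of_equiv (Atom × Finset Atom)
    ⟨fun p => ⟨p.1, p.2⟩, fun Q => (Q.head, Q.body), fun _ => rfl, fun _ => rfl⟩

/-- The combination lemma for free-connex views : local solutions that agree with a
target tuple `t` on the head variables can be combined into a global solution. -/
lemma comb (σ : Schema) (V : CQ) (hV : isCQ σ V)
    (hfc : hasJoinTree (insert V.head V.body))
    (D : Database) (t : ℕ → ℕ) (νB : (B : Atom) → B ∈ V.body → ℕ → ℕ)
    (hνB : ∀ (B : Atom) (hB : B ∈ V.body),
      (∀ A ∈ V.body, mapAtom (νB B hB) A ∈ D) ∧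
      ∀ x, x ∈ B.vars → x ∈ V.head.vars → νB B hB x = t x) :
    ∃ ν : ℕ → ℕ, (∀ A ∈ V.body, mapAtom ν A ∈ D) ∧ ∀ x ∈ V.head.vars, ν x = t x := by
  classical
  obtain ⟨T, hTtree, hTjoin⟩ := hfc
  have hhead : V.head ∈ insert V.head V.body := Finset.mem_insert_self _ _
  set H : {A : Atom // A ∈ insert V.head V.body} := ⟨V.head, hhead⟩ with hH
  have hne : ∀ A ∈ V.body, A ≠ V.head := by
    intro A hA h
    exact hV.2.2.1 (h ▸ (hV.2.1 A hA).1)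
  obtain ⟨f, hf1, hf2, hf3⟩ := tree_pick hTtree H (fun C => C.1.vars) hTjoin
  have embne : ∀ (A : Atom) (hA : A ∈ V.body),
      (⟨A, Finset.mem_insert_of_mem hA⟩ : {A : Atom // A ∈ insert V.head V.body}) ≠ H := by
    intro A hA h
    exact hne A hA (congrArg Subtype.val h)
  -- the selected valuation atom for each body atom
  have fbody : ∀ (A : Atom) (hA : A ∈ V.body),
      (f ⟨A, Finset.mem_insert_of_mem hA⟩).1 ∈ V.body := by
    intro A hA
    have h1 := hf1 _ (embne A hA)
    have h2 := (f ⟨A, Finset.mem_insert_of_mem hA⟩).2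
    rcases Finset.mem_insert.1 h2 with h | h
    · exact absurd (Subtype.ext h) h1
    · exact h
  set ν : ℕ → ℕ := fun x =>
    if x ∈ V.head.vars then t x
    else if hx : ∃ A, A ∈ V.body ∧ x ∈ A.vars then
      νB (f ⟨hx.choose, Finset.mem_insert_of_mem hx.choose_spec.1⟩).1
        (fbody hx.choose hx.choose_spec.1) x
    else t x with hν
  refine ⟨ν, ?_, ?_⟩
  · intro A hA
    have hAeq : mapAtom ν A =
        mapAtom (νB (f ⟨A, Finset.mem_insert_of_mem hA⟩).1 (fbody A hA)) A := by
      apply mapAtom_congr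
      intro x hxA
      by_cases hxh : x ∈ V.head.vars
      · have hx2 : x ∈ (f ⟨A, Finset.mem_insert_of_mem hA⟩).1.vars :=
          hf2 ⟨A, Finset.mem_insert_of_mem hA⟩ x hxh hxA
        have := (hνB _ (fbody A hA)).2 x hx2 hxh
        simp only [hν, if_pos hxh]
        exact this.symm
      · have hex : ∃ A', A' ∈ V.body ∧ x ∈ A'.vars := ⟨A, hA, hxA⟩
        simp only [hν, if_neg hxh, dif_pos hex]
        have hfeq : f ⟨hex.choose, Finset.mem_insert_of_mem hex.choose_spec.1⟩ =
            f ⟨A, Finset.mem_insert_of_mem hA⟩ := by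
          apply hf3 _ _ x (embne _ hex.choose_spec.1) (embne A hA)
          · exact hex.choose_spec.2
          · exact hxA
          · exact hxh
        congr 1
        exact congrArg Subtype.val hfeq
    rw [hAeq]
    exact (hνB _ (fbody A hA)).1 A hA
  · intro x hx
    simp only [hν, if_pos hx]
/-- The projection list: variables of `B` that are head variables of `V`. -/
def projL (V : CQ) (B : Atom) : List ℕ :=
  (B.args.filter (fun x => decide (x ∈ V.head.args))).dedup

lemma mem_projL {V : CQ} {B : Atom} {x : ℕ} :
    x ∈ projL V B ↔ x ∈ B.args ∧ x ∈ V.head.args := by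
  simp [projL, List.mem_dedup, List.mem_filter]

lemma projL_nodup (V : CQ) (B : Atom) : (projL V B).Nodup := List.nodup_dedup _

/-- The projection view associated with a view `V` and a body atom `B`. -/
def mkW (r : CQ × Atom → ℕ) (V : CQ) (B : Atom) : CQ := ⟨⟨r (V, B), projL V B⟩, V.body⟩

lemma viewDB_mem {𝒱 : Finset CQ} {D : Database} {F : Atom} :
    F ∈ viewDB 𝒱 D ↔ ∃ V ∈ 𝒱, F ∈ evalCQ V D := by simp [viewDB]

lemma rel_of_evalCQ {V : CQ} {D : Database} {F : Atom} (h : F ∈ evalCQ V D) :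
    F.rel = V.head.rel := by
  obtain ⟨ν, _, h2⟩ := h; rw [← h2]; rfl

lemma viewSet_unique {σ : Schema} {𝒱 : Finset CQ} (h : isViewSet σ 𝒱) {V V' : CQ}
    (hV : V ∈ 𝒱) (hV' : V' ∈ 𝒱) (hrel : V.head.rel = V'.head.rel) : V = V' := by
  by_contra hne; exact h.2 V hV V' hV' hne hrel

lemma headrel_forced {σ : Schema} {𝒰 : Finset CQ} {Q Q' : CQ} (hQ : isCQ σ Q)
    (h : isRewriting σ 𝒰 Q Q') : Q'.head.rel = Q.head.rel := by
  have hD : (↑Q.body : Set Atom).Finite := Q.body.finite_toSet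
  have hover : isDBOver σ ↑Q.body := fun F hF => hQ.2.1 F (Finset.mem_coe.1 hF)
  have hmem : Q.head ∈ evalCQ Q ↑Q.body :=
    ⟨id, fun A hA => by simpa [mapAtom_id] using hA, mapAtom_id _⟩
  rw [← h.2 _ hD hover] at hmem
  obtain ⟨ν, _, h2⟩ := hmem
  rw [← h2]; rfl
lemma transferVW (σ : Schema) (𝒱 : Finset CQ) (h𝒱 : isViewSet σ 𝒱)
    (hfc : ∀ V ∈ 𝒱, isFreeConnex V)
    (r : CQ × Atom → ℕ) (hrinj : Function.Injective r)
    (𝒲 : Finset CQ)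
    (h𝒲 : ∀ V B, V ∈ 𝒱 → B ∈ V.body → mkW r V B ∈ 𝒲)
    (h𝒲' : ∀ W ∈ 𝒲, ∃ V B, V ∈ 𝒱 ∧ B ∈ V.body ∧ W = mkW r V B)
    (Q Q' : CQ) (hQ : isCQ σ Q) (hQW : ∀ W ∈ 𝒲, Q.head.rel ≠ W.head.rel)
    (hrw : isRewriting σ 𝒱 Q Q') :
    ∃ Q'', isRewriting σ 𝒲 Q Q'' := by
  classical
  have hQ'rel : Q'.head.rel = Q.head.rel := headrel_forced hQ hrw
  obtain ⟨⟨hne', hatoms, hhrel, hsafe⟩, hsem⟩ := hrw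
  choose Vof hVof hrel hlen using hatoms
  -- the unification relation and a representative function for its closure
  set rgen : ℕ → ℕ → Prop := fun a b => ∃ (A : Atom) (hA : A ∈ Q'.body) (i j : ℕ),
    i < A.args.length ∧ j < A.args.length ∧
    (Vof A hA).head.args.getD i 0 = (Vof A hA).head.args.getD j 0 ∧
    a = A.args.getD i 0 ∧ b = A.args.getD j 0 with hrgen
  set ρ : ℕ → ℕ := fun x => sInf {y | Relation.EqvGen rgen x y} with hρ
  have hρ1 : ∀ x, Relation.EqvGen rgen x (ρ x) := fun x =>
    Nat.sInf_mem (s := {y | Relation.EqvGen rgen x y}) ⟨x, Relation.EqvGen.refl x⟩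
  have hρ2 : ∀ a b, Relation.EqvGen rgen a b → ρ a = ρ b := by
    intro a b hab
    have hset : {y | Relation.EqvGen rgen a y} = {y | Relation.EqvGen rgen b y} := by
      ext y
      exact ⟨fun h => Relation.EqvGen.trans _ _ _ (Relation.EqvGen.symm _ _ hab) h,
             fun h => Relation.EqvGen.trans _ _ _ hab h⟩
    simp only [hρ, hset]
  -- the substitutions used for building the W-atoms
  set θ : (A : Atom) → A ∈ Q'.body → ℕ → ℕ := fun A hA x =>
    ρ (A.args.getD ((Vof A hA).head.args.idxOf x) 0) with hθ
  have hθ1 : ∀ (A : Atom) (hA : A ∈ Q'.body) (i : ℕ), i < A.args.length →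
      θ A hA ((Vof A hA).head.args.getD i 0) = ρ (A.args.getD i 0) := by
    intro A hA i hi
    have hil : i < (Vof A hA).head.args.length := by rw [← hlen A hA]; exact hi
    have hymem : (Vof A hA).head.args.getD i 0 ∈ (Vof A hA).head.args := by
      rw [List.getD_eq_getElem _ _ hil]; exact List.getElem_mem _
    have hjl : (Vof A hA).head.args.idxOf ((Vof A hA).head.args.getD i 0) <
        (Vof A hA).head.args.length := List.idxOf_lt_length_iff.2 hymem
    have hjA : (Vof A hA).head.args.idxOf ((Vof A hA).head.args.getD i 0) <
        A.args.length := by rw [hlen A hA]; exact hjl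
    have hsame : (Vof A hA).head.args.getD
        ((Vof A hA).head.args.idxOf ((Vof A hA).head.args.getD i 0)) 0 =
        (Vof A hA).head.args.getD i 0 := by
      rw [List.getD_eq_getElem _ _ hjl]
      exact List.getElem_idxOf hjl
    simp only [hθ]
    exact hρ2 _ _ (Relation.EqvGen.rel _ _ ⟨A, hA, _, i, hjA, hi, hsame, rfl, rfl⟩)
  -- the rewritten query
  set Q'' : CQ := ⟨mapAtom ρ Q'.head,
    Q'.body.attach.biUnion (fun a => (Vof a.1 a.2).body.attach.image
      (fun b => (⟨r (Vof a.1 a.2, b.1), (projL (Vof a.1 a.2) b.1).map (θ a.1 a.2)⟩ : Atom)))⟩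
    with hQ''def
  have hQ''mem : ∀ C : Atom, C ∈ Q''.body ↔ ∃ (A : Atom) (hA : A ∈ Q'.body)
      (B : Atom) (_ : B ∈ (Vof A hA).body),
      C = ⟨r (Vof A hA, B), (projL (Vof A hA) B).map (θ A hA)⟩ := by
    intro C
    simp only [hQ''def, Finset.mem_biUnion, Finset.mem_attach, Finset.mem_image,
      true_and, Subtype.exists]
    constructor
    · rintro ⟨a, ha, ⟨b, hb, h⟩⟩; exact ⟨a, ha, b, hb, h.symm⟩
    · rintro ⟨A, hA, B, hB, h⟩; exact ⟨A, hA, B, hB, h.symm⟩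
  -- valuations satisfying Q' respect the unification relation
  have hresp : ∀ (D : Database) (μ : ℕ → ℕ),
      (∀ A ∈ Q'.body, mapAtom μ A ∈ viewDB 𝒱 D) →
      ∀ a b, Relation.EqvGen rgen a b → μ a = μ b := by
    intro D μ hsat a b hab
    induction hab with
    | rel a b h =>
      obtain ⟨A, hA, i, j, hi, hj, hsame, ha, hb⟩ := h
      obtain ⟨V', hV', hF⟩ := viewDB_mem.1 (hsat A hA)
      have hVeq : V' = Vof A hA := viewSet_unique h𝒱 hV' (hVof A hA)
        (by rw [← rel_of_evalCQ hF]; exact hrel A hA)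
      subst hVeq
      obtain ⟨ν, hν, hνh⟩ := hF
      have hargs : (Vof A hA).head.args.map ν = A.args.map μ := congrArg Atom.args hνh
      have hil : i < (Vof A hA).head.args.length := by rw [← hlen A hA]; exact hi
      have hjl : j < (Vof A hA).head.args.length := by rw [← hlen A hA]; exact hj
      have h1 : ν ((Vof A hA).head.args.getD i 0) = μ (A.args.getD i 0) := by
        have := congrArg (fun l => l.getD i (μ 0)) hargs
        simpa [List.getD_eq_getElem, hil, hi, (by simpa using hil :
          i < ((Vof A hA).head.args.map ν).length), (by simpa using hi :
          i < (A.args.map μ).length)] using this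
      have h2 : ν ((Vof A hA).head.args.getD j 0) = μ (A.args.getD j 0) := by
        have := congrArg (fun l => l.getD j (μ 0)) hargs
        simpa [List.getD_eq_getElem, hjl, hj, (by simpa using hjl :
          j < ((Vof A hA).head.args.map ν).length), (by simpa using hj :
          j < (A.args.map μ).length)] using this
      rw [ha, hb, ← h1, ← h2, hsame]
    | refl a => rfl
    | symm a b _ ih => exact ih.symm
    | trans a b c _ _ ih1 ih2 => exact ih1.trans ih2
  -- the key semantic equality
  have hkey : ∀ D : Database, evalCQ Q'' (viewDB 𝒲 D) = evalCQ Q' (viewDB 𝒱 D) := by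
    intro D
    ext F
    constructor
    · rintro ⟨μ, hsat, hhd⟩
      have hlocal : ∀ (A : Atom) (hA : A ∈ Q'.body) (B : Atom), B ∈ (Vof A hA).body →
          ∃ ν : ℕ → ℕ, (∀ A₀ ∈ (Vof A hA).body, mapAtom ν A₀ ∈ D) ∧
            ∀ x, x ∈ B.vars → x ∈ (Vof A hA).head.vars → ν x = μ (θ A hA x) := by
        intro A hA B hB
        have hCmem : (⟨r (Vof A hA, B), (projL (Vof A hA) B).map (θ A hA)⟩ : Atom)
            ∈ Q''.body := (hQ''mem _).2 ⟨A, hA, B, hB, rfl⟩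
        obtain ⟨W', hW', hF⟩ := viewDB_mem.1 (hsat _ hCmem)
        obtain ⟨V₂, B₂, hV₂, hB₂, hWeq⟩ := h𝒲' W' hW'
        have hreleq : r (V₂, B₂) = r (Vof A hA, B) := by
          have h1 := rel_of_evalCQ hF
          rw [hWeq] at h1
          exact h1.symm
        have hpair : (V₂, B₂) = (Vof A hA, B) := hrinj hreleq
        injection hpair with hp1 hp2
        rw [hWeq, hp1, hp2] at hF
        obtain ⟨ν, hν, hνh⟩ := hF
        have hargs : (projL (Vof A hA) B).map ν =
            ((projL (Vof A hA) B).map (θ A hA)).map μ := congrArg Atom.args hνh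
        rw [List.map_map] at hargs
        have hpt := List.map_inj_left.1 hargs
        refine ⟨ν, hν, ?_⟩
        intro x hxB hxh
        exact hpt x (mem_projL.2 ⟨mem_vars_iff.1 hxB, mem_vars_iff.1 hxh⟩)
      choose νB hνB1 hνB2 using hlocal
      have hglob : ∀ (A : Atom) (hA : A ∈ Q'.body), ∃ ν : ℕ → ℕ,
          (∀ A₀ ∈ (Vof A hA).body, mapAtom ν A₀ ∈ D) ∧
          ∀ x ∈ (Vof A hA).head.vars, ν x = μ (θ A hA x) :=
        fun A hA => comb σ (Vof A hA) (h𝒱.1 _ (hVof A hA)) (hfc _ (hVof A hA)).2 D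
          (fun x => μ (θ A hA x)) (fun B hB => νB A hA B hB)
          (fun B hB => ⟨hνB1 A hA B hB, hνB2 A hA B hB⟩)
      choose νA hνA1 hνA2 using hglob
      refine ⟨fun x => μ (ρ x), ?_, ?_⟩
      · intro A hA
        have heq : mapAtom (fun x => μ (ρ x)) A = mapAtom (νA A hA) (Vof A hA).head := by
          simp only [mapAtom, Atom.mk.injEq]
          refine ⟨hrel A hA, ?_⟩
          apply List.ext_getElem (by simpa using hlen A hA)
          intro i h1 h2
          have hi : i < A.args.length := by simpa using h1
          have hil : i < (Vof A hA).head.args.length := by simpa using h2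
          simp only [List.getElem_map]
          have e1 : θ A hA ((Vof A hA).head.args.getD i 0) = ρ (A.args.getD i 0) :=
            hθ1 A hA i hi
          have e2 : (Vof A hA).head.args.getD i 0 ∈ (Vof A hA).head.vars := by
            rw [List.getD_eq_getElem _ _ hil]
            exact mem_vars_iff.2 (List.getElem_mem _)
          have e3 := hνA2 A hA _ e2
          rw [e1] at e3
          rw [List.getD_eq_getElem _ _ hil, List.getD_eq_getElem _ _ hi] at e3
          exact e3.symm
        rw [heq]
        exact viewDB_mem.2 ⟨Vof A hA, hVof A hA, νA A hA, hνA1 A hA, rfl⟩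
      · rw [← mapAtom_mapAtom]
        exact hhd
    · rintro ⟨μ, hsat, hhd⟩
      refine ⟨μ, ?_, ?_⟩
      · intro C hC
        obtain ⟨A, hA, B, hB, rfl⟩ := (hQ''mem C).1 hC
        obtain ⟨V', hV', hF⟩ := viewDB_mem.1 (hsat A hA)
        have hVeq : V' = Vof A hA := viewSet_unique h𝒱 hV' (hVof A hA)
          (by rw [← rel_of_evalCQ hF]; exact hrel A hA)
        subst hVeq
        obtain ⟨ν, hν, hνh⟩ := hF
        have hargs : (Vof A hA).head.args.map ν = A.args.map μ := congrArg Atom.args hνh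
        have heq : mapAtom μ (⟨r (Vof A hA, B), (projL (Vof A hA) B).map (θ A hA)⟩ : Atom)
            = mapAtom ν (mkW r (Vof A hA) B).head := by
          simp only [mapAtom, mkW, Atom.mk.injEq, List.map_map]
          refine ⟨trivial, ?_⟩
          apply List.map_congr_left
          intro x hx
          obtain ⟨hxB, hxh⟩ := mem_projL.1 hx
          have hil : (Vof A hA).head.args.idxOf x < (Vof A hA).head.args.length :=
            List.idxOf_lt_length_iff.2 hxh
          have hiA : (Vof A hA).head.args.idxOf x < A.args.length := by
            rw [hlen A hA]; exact hil
          have hx_eq : (Vof A hA).head.args.getD ((Vof A hA).head.args.idxOf x) 0 = x := by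
            rw [List.getD_eq_getElem _ _ hil]
            exact List.getElem_idxOf hil
          have h2 : μ (ρ (A.args.getD ((Vof A hA).head.args.idxOf x) 0)) =
              μ (A.args.getD ((Vof A hA).head.args.idxOf x) 0) :=
            hresp D μ hsat _ _ (Relation.EqvGen.symm _ _ (hρ1 _))
          have hpt : ν ((Vof A hA).head.args[(Vof A hA).head.args.idxOf x]'hil) =
              μ (A.args[(Vof A hA).head.args.idxOf x]'hiA) := by
            have := congrArg (fun l => l.getD ((Vof A hA).head.args.idxOf x) (μ 0)) hargs
            simp only [List.getD_eq_getElem, (by simpa using hil :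
              (Vof A hA).head.args.idxOf x < ((Vof A hA).head.args.map ν).length),
              (by simpa using hiA :
              (Vof A hA).head.args.idxOf x < (A.args.map μ).length),
              List.getElem_map] at this
            exact this
          have hxg : (Vof A hA).head.args[(Vof A hA).head.args.idxOf x]'hil = x :=
            List.getElem_idxOf hil
          have h3 : ν x = μ (A.args.getD ((Vof A hA).head.args.idxOf x) 0) :=
            calc ν x = ν ((Vof A hA).head.args[(Vof A hA).head.args.idxOf x]'hil) :=
                  (congrArg ν hxg).symm
              _ = μ (A.args[(Vof A hA).head.args.idxOf x]'hiA) := hpt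
              _ = μ (A.args.getD ((Vof A hA).head.args.idxOf x) 0) := by
                  rw [List.getD_eq_getElem _ _ hiA]
          show (fun x => μ (θ A hA x)) x = ν x
          simp only [hθ]
          rw [h2]
          exact h3.symm
        rw [heq]
        exact viewDB_mem.2 ⟨mkW r (Vof A hA) B, h𝒲 _ _ (hVof A hA) hB, ν, hν, rfl⟩
      · have h4 : mapAtom μ Q''.head = mapAtom μ Q'.head := by
          show mapAtom μ (mapAtom ρ Q'.head) = mapAtom μ Q'.head
          rw [mapAtom_mapAtom]
          exact mapAtom_congr fun x _ =>
            hresp D μ hsat _ _ (Relation.EqvGen.symm _ _ (hρ1 x))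
        exact h4.trans hhd
  -- package everything up
  refine ⟨Q'', ⟨⟨?_, ?_, ?_, ?_⟩, ?_⟩⟩
  · obtain ⟨A, hA⟩ := hne'
    obtain ⟨B, hB⟩ := (h𝒱.1 _ (hVof A hA)).1
    exact ⟨_, (hQ''mem _).2 ⟨A, hA, B, hB, rfl⟩⟩
  · intro C hC
    obtain ⟨A, hA, B, hB, rfl⟩ := (hQ''mem C).1 hC
    exact ⟨mkW r (Vof A hA) B, h𝒲 _ _ (hVof A hA) hB, rfl, by simp [mkW]⟩
  · intro W hW
    have hrel'' : Q''.head.rel = Q.head.rel := hQ'rel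
    rw [hrel'']
    exact hQW W hW
  · intro x hx
    have hx' : x ∈ (Q'.head.args.map ρ).toFinset := hx
    rw [List.mem_toFinset, List.mem_map] at hx'
    obtain ⟨y, hymem, hyeq⟩ := hx'
    have hy : y ∈ varsOf Q'.body := hsafe (mem_vars_iff.2 hymem)
    obtain ⟨A, hA, hyA⟩ := mem_varsOf.1 hy
    obtain ⟨i, hi, hieq⟩ := List.mem_iff_getElem.1 (mem_vars_iff.1 hyA)
    have hil : i < (Vof A hA).head.args.length := by rw [← hlen A hA]; exact hi
    have hz : θ A hA ((Vof A hA).head.args.getD i 0) = ρ y := by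
      rw [hθ1 A hA i hi]
      congr 1
      rw [List.getD_eq_getElem _ _ hi, hieq]
    have hzh : (Vof A hA).head.args.getD i 0 ∈ (Vof A hA).head.vars := by
      rw [List.getD_eq_getElem _ _ hil]
      exact mem_vars_iff.2 (List.getElem_mem _)
    have hzb : (Vof A hA).head.args.getD i 0 ∈ varsOf (Vof A hA).body :=
      (h𝒱.1 _ (hVof A hA)).2.2.2 hzh
    obtain ⟨B, hB, hzB⟩ := mem_varsOf.1 hzb
    refine mem_varsOf.2 ⟨⟨r (Vof A hA, B), (projL (Vof A hA) B).map (θ A hA)⟩,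
      (hQ''mem _).2 ⟨A, hA, B, hB, rfl⟩, ?_⟩
    rw [← hyeq, ← hz]
    exact mem_vars_iff.2 (List.mem_map_of_mem
      (mem_projL.2 ⟨mem_vars_iff.1 hzB, mem_vars_iff.1 hzh⟩))
  · intro D hfin hover
    rw [hkey D, hsem D hfin hover]
lemma transferWV (σ : Schema) (𝒱 : Finset CQ) (h𝒱 : isViewSet σ 𝒱)
    (r : CQ × Atom → ℕ) (hrinj : Function.Injective r)
    (𝒲 : Finset CQ)
    (h𝒲' : ∀ W ∈ 𝒲, ∃ V B, V ∈ 𝒱 ∧ B ∈ V.body ∧ W = mkW r V B)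
    (Q Q'' : CQ) (hQ : isCQ σ Q) (hQV : ∀ V ∈ 𝒱, Q.head.rel ≠ V.head.rel)
    (hrw : isRewriting σ 𝒲 Q Q'') :
    ∃ Q', isRewriting σ 𝒱 Q Q' := by
  classical
  have hQ''rel : Q''.head.rel = Q.head.rel := headrel_forced hQ hrw
  obtain ⟨⟨hne'', hatoms, hhrel, hsafe⟩, hsem⟩ := hrw
  choose Wof hWof hrel hlen using hatoms
  choose Vof Bof hVof hBof hWeq using fun (A : Atom) (hA : A ∈ Q''.body) =>
    h𝒲' (Wof A hA) (hWof A hA)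
  -- fresh variables
  obtain ⟨f₀, hf₀⟩ := Countable.exists_injective_nat (Atom × ℕ)
  set N : ℕ := (CQ.vars Q'').sup id with hN
  set fresh : Atom × ℕ → ℕ := fun p => N + 1 + f₀ p with hfresh
  have hfreshinj : Function.Injective fresh := by
    intro a b h
    apply hf₀
    simp only [hfresh] at h
    omega
  have hfreshbig : ∀ p, ∀ y ∈ CQ.vars Q'', fresh p ≠ y := by
    intro p y hy h
    have hyN : y ≤ N := Finset.le_sup (f := id) hy
    simp only [hfresh] at h
    omega
  -- the substitutions building the V-atoms
  set g : (A : Atom) → A ∈ Q''.body → ℕ → ℕ := fun A hA x =>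
    if x ∈ projL (Vof A hA) (Bof A hA) then
      A.args.getD ((projL (Vof A hA) (Bof A hA)).idxOf x) 0
    else fresh (A, x) with hg
  set RA : (A : Atom) → A ∈ Q''.body → Atom := fun A hA =>
    ⟨(Vof A hA).head.rel, (Vof A hA).head.args.map (g A hA)⟩ with hRA
  set Q' : CQ := ⟨Q''.head, Q''.body.attach.image (fun a => RA a.1 a.2)⟩ with hQ'def
  have hQ'mem : ∀ C : Atom, C ∈ Q'.body ↔
      ∃ (A : Atom) (hA : A ∈ Q''.body), C = RA A hA := by
    intro C
    simp only [hQ'def, Finset.mem_image, Finset.mem_attach, true_and, Subtype.exists]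
    constructor
    · rintro ⟨a, ha, h⟩; exact ⟨a, ha, h.symm⟩
    · rintro ⟨A, hA, h⟩; exact ⟨A, hA, h.symm⟩
  have hlen' : ∀ (A : Atom) (hA : A ∈ Q''.body),
      A.args.length = (projL (Vof A hA) (Bof A hA)).length := by
    intro A hA
    rw [hlen A hA, hWeq A hA]
    rfl
  have hrel' : ∀ (A : Atom) (hA : A ∈ Q''.body),
      A.rel = r (Vof A hA, Bof A hA) := by
    intro A hA
    rw [hrel A hA, hWeq A hA]
    rfl
  -- the key semantic equality
  have hkey : ∀ D : Database, evalCQ Q' (viewDB 𝒱 D) = evalCQ Q'' (viewDB 𝒲 D) := by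
    intro D
    ext F
    constructor
    · rintro ⟨μ, hsat, hhd⟩
      refine ⟨μ, ?_, hhd⟩
      intro A hA
      have hsatA := hsat (RA A hA) ((hQ'mem _).2 ⟨A, hA, rfl⟩)
      obtain ⟨V', hV', hF⟩ := viewDB_mem.1 hsatA
      have hVeq : V' = Vof A hA := viewSet_unique h𝒱 hV' (hVof A hA)
        (by rw [← rel_of_evalCQ hF]; rfl)
      subst hVeq
      obtain ⟨ν, hν, hνh⟩ := hF
      have hargs : (Vof A hA).head.args.map ν =
          ((Vof A hA).head.args.map (g A hA)).map μ := congrArg Atom.args hνh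
      rw [List.map_map] at hargs
      have hpt := List.map_inj_left.1 hargs
      refine viewDB_mem.2 ⟨Wof A hA, hWof A hA, ν, ?_, ?_⟩
      · rw [hWeq A hA]
        exact hν
      · rw [hWeq A hA]
        simp only [mkW, mapAtom, Atom.mk.injEq]
        refine ⟨(hrel' A hA).symm, ?_⟩
        apply List.ext_getElem (by simpa using (hlen' A hA).symm)
        intro i h1 h2
        have hiL : i < (projL (Vof A hA) (Bof A hA)).length := by simpa using h1
        have hiA : i < A.args.length := by simpa using h2
        simp only [List.getElem_map]
        have hxh : (projL (Vof A hA) (Bof A hA))[i] ∈ (Vof A hA).head.args :=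
          (mem_projL.1 (List.getElem_mem _)).2
        rw [hpt _ hxh]
        show μ (g A hA _) = μ (A.args[i]'hiA)
        congr 1
        simp only [hg, if_pos (List.getElem_mem _)]
        rw [List.Nodup.idxOf_getElem (projL_nodup _ _) i hiL]
        rw [List.getD_eq_getElem _ _ hiA]
    · rintro ⟨μ, hsat, hhd⟩
      have hlocal : ∀ (A : Atom) (hA : A ∈ Q''.body),
          ∃ ν : ℕ → ℕ, (∀ A₀ ∈ (Vof A hA).body, mapAtom ν A₀ ∈ D) ∧
            (projL (Vof A hA) (Bof A hA)).map ν = A.args.map μ := by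
        intro A hA
        obtain ⟨W', hW', hF⟩ := viewDB_mem.1 (hsat A hA)
        obtain ⟨V₂, B₂, hV₂, hB₂, hWeq₂⟩ := h𝒲' W' hW'
        have hreleq : r (V₂, B₂) = r (Vof A hA, Bof A hA) := by
          have h1 := rel_of_evalCQ hF
          rw [hWeq₂] at h1
          exact h1.symm.trans (hrel' A hA)
        have hpair : (V₂, B₂) = (Vof A hA, Bof A hA) := hrinj hreleq
        injection hpair with hp1 hp2
        rw [hWeq₂, hp1, hp2] at hF
        obtain ⟨ν, hν, hνh⟩ := hF
        exact ⟨ν, hν, congrArg Atom.args hνh⟩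
      choose νA hνA1 hνA2 using hlocal
      set μ' : ℕ → ℕ := Function.extend fresh
        (fun p => if hp : p.1 ∈ Q''.body then νA p.1 hp p.2 else 0) μ with hμ'
      have hμ'old : ∀ y ∈ CQ.vars Q'', μ' y = μ y := by
        intro y hy
        refine Function.extend_apply' _ _ _ ?_
        rintro ⟨p, hp⟩
        exact hfreshbig p y hy hp
      have hμ'fresh : ∀ (A : Atom) (hA : A ∈ Q''.body) (x : ℕ),
          μ' (fresh (A, x)) = νA A hA x := by
        intro A hA x
        rw [hμ', hfreshinj.extend_apply]
        exact dif_pos hA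
      refine ⟨μ', ?_, ?_⟩
      · intro C hC
        obtain ⟨A, hA, rfl⟩ := (hQ'mem C).1 hC
        have heq : mapAtom μ' (RA A hA) = mapAtom (νA A hA) (Vof A hA).head := by
          simp only [hRA, mapAtom, Atom.mk.injEq, List.map_map]
          refine ⟨trivial, ?_⟩
          apply List.map_congr_left
          intro x hxh
          show μ' (g A hA x) = νA A hA x
          by_cases hxL : x ∈ projL (Vof A hA) (Bof A hA)
          · simp only [hg, if_pos hxL]
            have hiL : (projL (Vof A hA) (Bof A hA)).idxOf x <
                (projL (Vof A hA) (Bof A hA)).length := List.idxOf_lt_length_iff.2 hxL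
            have hiA : (projL (Vof A hA) (Bof A hA)).idxOf x < A.args.length := by
              rw [hlen' A hA]; exact hiL
            have hmemv : A.args.getD ((projL (Vof A hA) (Bof A hA)).idxOf x) 0
                ∈ CQ.vars Q'' := by
              rw [List.getD_eq_getElem _ _ hiA]
              exact Finset.mem_union.2 (Or.inr (mem_varsOf.2
                ⟨A, hA, mem_vars_iff.2 (List.getElem_mem _)⟩))
            rw [hμ'old _ hmemv]
            have hptA : νA A hA ((projL (Vof A hA) (Bof A hA))[(projL (Vof A hA)
                (Bof A hA)).idxOf x]'hiL) = μ (A.args[(projL (Vof A hA)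
                (Bof A hA)).idxOf x]'hiA) := by
              have := congrArg (fun l => l.getD ((projL (Vof A hA) (Bof A hA)).idxOf x)
                (μ 0)) (hνA2 A hA)
              simp only [List.getD_eq_getElem, (by simpa using hiL :
                (projL (Vof A hA) (Bof A hA)).idxOf x <
                  ((projL (Vof A hA) (Bof A hA)).map (νA A hA)).length),
                (by simpa using hiA :
                (projL (Vof A hA) (Bof A hA)).idxOf x < (A.args.map μ).length),
                List.getElem_map] at this
              exact this
            have hxg : (projL (Vof A hA) (Bof A hA))[(projL (Vof A hA)
                (Bof A hA)).idxOf x]'hiL = x := List.getElem_idxOf hiL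
            rw [hxg] at hptA
            rw [List.getD_eq_getElem _ _ hiA, ← hptA]
          · simp only [hg, if_neg hxL]
            exact hμ'fresh A hA x
        rw [heq]
        exact viewDB_mem.2 ⟨Vof A hA, hVof A hA, νA A hA, hνA1 A hA, rfl⟩
      · have h4 : mapAtom μ' Q'.head = mapAtom μ Q''.head :=
          mapAtom_congr fun x hx => hμ'old x (Finset.mem_union.2 (Or.inl hx))
        exact h4.trans hhd
  -- package everything up
  refine ⟨Q', ⟨⟨?_, ?_, ?_, ?_⟩, ?_⟩⟩
  · obtain ⟨A, hA⟩ := hne''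
    exact ⟨_, (hQ'mem _).2 ⟨A, hA, rfl⟩⟩
  · intro C hC
    obtain ⟨A, hA, rfl⟩ := (hQ'mem C).1 hC
    exact ⟨Vof A hA, hVof A hA, rfl, by simp [hRA, mapAtom]⟩
  · intro V hV
    show Q''.head.rel ≠ V.head.rel
    rw [hQ''rel]
    exact hQV V hV
  · intro x hx
    have hx' : x ∈ varsOf Q''.body := hsafe hx
    obtain ⟨A, hA, hxA⟩ := mem_varsOf.1 hx'
    obtain ⟨i, hi, hieq⟩ := List.mem_iff_getElem.1 (mem_vars_iff.1 hxA)
    have hiL : i < (projL (Vof A hA) (Bof A hA)).length := by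
      rw [← hlen' A hA]; exact hi
    have hyh : (projL (Vof A hA) (Bof A hA))[i] ∈ (Vof A hA).head.args :=
      (mem_projL.1 (List.getElem_mem _)).2
    refine mem_varsOf.2 ⟨RA A hA, (hQ'mem _).2 ⟨A, hA, rfl⟩, mem_vars_iff.2 ?_⟩
    have hgx : g A hA ((projL (Vof A hA) (Bof A hA))[i]'hiL) = x := by
      simp only [hg, if_pos (List.getElem_mem _)]
      rw [List.Nodup.idxOf_getElem (projL_nodup _ _) i hiL]
      rw [List.getD_eq_getElem _ _ hi]
      exact hieq
    rw [← hgx]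
    exact List.mem_map_of_mem hyh
  · intro D hfin hover
    rw [hkey D, hsem D hfin hover]
/-- For every finite set `𝒱` of free-connex acyclic views over a schema
`σ` of arity at most `k`, there is a finite set `𝒲` of acyclic views over `σ`, each of
head arity at most `k`, such that every CQ over `σ` is 𝒱-rewritable iff it is
𝒲-rewritable. -/
theorem statement11 (σ : Schema) (k : ℕ) (har : ∀ r ∈ σ.rels, σ.ar r ≤ k)
    (𝒱 : Finset CQ) (h𝒱 : isViewSet σ 𝒱) (hfc : ∀ V ∈ 𝒱, isFreeConnex V) :
    ∃ 𝒲 : Finset CQ, isViewSet σ 𝒲 ∧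
      (∀ W ∈ 𝒲, isAcyclicCQ W ∧ W.head.args.length ≤ k) ∧
      ∀ Q : CQ, isCQ σ Q →
        (∀ V ∈ 𝒱, Q.head.rel ≠ V.head.rel) → (∀ W ∈ 𝒲, Q.head.rel ≠ W.head.rel) →
        ((∃ Q', isRewriting σ 𝒱 Q Q') ↔ (∃ Q', isRewriting σ 𝒲 Q Q')) := by
  classical
  by_cases hV0 : 𝒱 = ∅
  · subst hV0
    refine ⟨∅, ⟨fun V h => absurd h (Finset.notMem_empty V),
      fun V h _ _ _ => absurd h (Finset.notMem_empty V)⟩,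
      fun W h => absurd h (Finset.notMem_empty W), ?_⟩
    intro Q hQ h1 h2
    constructor
    · rintro ⟨Q', ⟨⟨hne, hatoms, _, _⟩, _⟩⟩
      obtain ⟨A, hA⟩ := hne
      obtain ⟨V, hV, _⟩ := hatoms A hA
      exact absurd hV (Finset.notMem_empty V)
    · rintro ⟨Q', ⟨⟨hne, hatoms, _, _⟩, _⟩⟩
      obtain ⟨A, hA⟩ := hne
      obtain ⟨V, hV, _⟩ := hatoms A hA
      exact absurd hV (Finset.notMem_empty V)
  · by_cases hinf : (σ.relsᶜ : Set ℕ).Infinite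
    · -- main construction
      obtain ⟨f₁, hf₁⟩ := Countable.exists_injective_nat (CQ × Atom)
      set e : ℕ ↪ ↥(σ.relsᶜ) := Set.Infinite.natEmbedding _ hinf with he
      set r : CQ × Atom → ℕ := fun p => (e (f₁ p) : ℕ) with hr
      have hrinj : Function.Injective r := by
        intro a b h
        exact hf₁ (e.injective (Subtype.val_injective h))
      have hrfresh : ∀ p, r p ∉ σ.rels := fun p => (e (f₁ p)).2
      set 𝒲 : Finset CQ := (𝒱.sigma (fun V => V.body)).image
        (fun p => mkW r p.1 p.2) with h𝒲def
      have h𝒲 : ∀ V B, V ∈ 𝒱 → B ∈ V.body → mkW r V B ∈ 𝒲 := by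
        intro V B hV hB
        have hmem : (⟨V, B⟩ : Σ _ : CQ, Atom) ∈ 𝒱.sigma (fun V => V.body) :=
          Finset.mem_sigma.2 ⟨hV, hB⟩
        exact Finset.mem_image_of_mem _ hmem
      have h𝒲' : ∀ W ∈ 𝒲, ∃ V B, V ∈ 𝒱 ∧ B ∈ V.body ∧ W = mkW r V B := by
        intro W hW
        obtain ⟨p, hp, hpe⟩ := Finset.mem_image.1 hW
        obtain ⟨h1, h2⟩ := Finset.mem_sigma.1 hp
        exact ⟨p.1, p.2, h1, h2, hpe.symm⟩
      have hviewset : isViewSet σ 𝒲 := by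
        constructor
        · intro W hW
          obtain ⟨V, B, hV, hB, rfl⟩ := h𝒲' W hW
          refine ⟨(h𝒱.1 V hV).1, fun A hA => (h𝒱.1 V hV).2.1 A hA, hrfresh (V, B), ?_⟩
          intro x hx
          have hx' : x ∈ projL V B := mem_vars_iff.1 hx
          refine mem_varsOf.2 ⟨B, hB, mem_vars_iff.2 (mem_projL.1 hx').1⟩
        · intro W hW W' hW' hne hrel
          obtain ⟨V, B, hV, hB, rfl⟩ := h𝒲' W hW
          obtain ⟨V', B', hV', hB', rfl⟩ := h𝒲' W' hW'
          have : r (V, B) = r (V', B') := hrel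
          have := hrinj this
          injection this with he1 he2
          exact hne (by rw [he1, he2])
      refine ⟨𝒲, hviewset, ?_, ?_⟩
      · intro W hW
        obtain ⟨V, B, hV, hB, rfl⟩ := h𝒲' W hW
        constructor
        · exact (hfc V hV).1
        · show (projL V B).length ≤ k
          calc (projL V B).length
              ≤ (B.args.filter (fun x => decide (x ∈ V.head.args))).length :=
                List.Sublist.length_le (List.dedup_sublist _)
            _ ≤ B.args.length := List.Sublist.length_le List.filter_sublist
            _ = σ.ar B.rel := ((h𝒱.1 V hV).2.1 B hB).2
            _ ≤ k := har B.rel ((h𝒱.1 V hV).2.1 B hB).1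
      · intro Q hQ hQV hQW
        constructor
        · rintro ⟨Q', hQ'⟩
          exact transferVW σ 𝒱 h𝒱 hfc r hrinj 𝒲 h𝒲 h𝒲' Q Q' hQ hQW hQ'
        · rintro ⟨Q'', hQ''⟩
          exact transferWV σ 𝒱 h𝒱 r hrinj 𝒲 h𝒲' Q Q'' hQ hQV hQ''
    · -- finitely many relation symbols outside σ: the statement is vacuous
      rw [Set.not_infinite] at hinf
      obtain ⟨V₀, hV₀⟩ := Finset.nonempty_iff_ne_empty.2 hV0
      set 𝒲 : Finset CQ := hinf.toFinset.image
        (fun h => (⟨⟨h, []⟩, V₀.body⟩ : CQ)) with h𝒲def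
      have hmem : ∀ W ∈ 𝒲, ∃ h ∈ σ.relsᶜ, W = (⟨⟨h, []⟩, V₀.body⟩ : CQ) := by
        intro W hW
        obtain ⟨h, hh, heq⟩ := Finset.mem_image.1 hW
        exact ⟨h, (Set.Finite.mem_toFinset hinf).1 hh, heq.symm⟩
      refine ⟨𝒲, ⟨?_, ?_⟩, ?_, ?_⟩
      · intro W hW
        obtain ⟨h, hh, rfl⟩ := hmem W hW
        refine ⟨(h𝒱.1 V₀ hV₀).1, fun A hA => (h𝒱.1 V₀ hV₀).2.1 A hA, hh, ?_⟩
        intro x hx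
        simp [Atom.vars] at hx
      · intro W hW W' hW' hne hrel
        obtain ⟨h, hh, rfl⟩ := hmem W hW
        obtain ⟨h', hh', rfl⟩ := hmem W' hW'
        have : h = h' := hrel
        exact hne (by rw [this])
      · intro W hW
        obtain ⟨h, hh, rfl⟩ := hmem W hW
        exact ⟨(hfc V₀ hV₀).1, by simp⟩
      · intro Q hQ hQV hQW
        exfalso
        have hQc : Q.head.rel ∈ σ.relsᶜ := hQ.2.2.1
        have : (⟨⟨Q.head.rel, []⟩, V₀.body⟩ : CQ) ∈ 𝒲 :=
          Finset.mem_image_of_mem _ ((Set.Finite.mem_toFinset hinf).2 hQc)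
        exact hQW _ this rfl
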